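/- Let L be a local field of mixed characteristic (0,p). The natural map H^1(R_{ℚ_p}(2)) → H^1(R_L(2)) on (φ,Γ)-cohomology is injective. Concretely: if f = Σ_{i∈ℤ} a_i T^i ∈ R_L satisfies that both (χ(γ)^2 γ − 1)f and (p^2 φ − 1)f have coefficients in ℚ_p, in particular if (p^2 φ − 1)f ∈ R_{ℚ_p}, then f ∈ R_{ℚ_p}. -/

import Mathlib

open scoped NNReal ENNReal

/-!
STATEMENT 15: Let `L` be a local field of mixed characteristic `(0,p)`.  The natural map
`H¹(R_{ℚ_p}(2)) → H¹(R_L(2))` is injective.  Concretely: if `f = Σ a_i T^i ∈ R_L` is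
such that `(p²φ − 1)f` has all coefficients in `ℚ_p` (in particular if
`(p²φ − 1)f ∈ R_{ℚ_p}`), then `f ∈ R_{ℚ_p}`.

Laurent series are represented by coefficient functions `ℤ → L`; `ℚ_p ⊆ L` is modelled
as a closed subfield `K0`, and the Frobenius `φ(T) = (1+T)^p − 1` is pinned down
concretely through the convolution powers `SP i` of the coefficient sequence `S` of
`(1+T)^p − 1` (which have coefficients in `K0`): `(φ f)_k = Σ_i f_i (S^i)_k`.
-/

variable {L : Type*} [NontriviallyNormedField L]

/-- `f ∈ R_L`: convergence on some annulus `ρ₀ ≤ |T| < 1`. -/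
def MemRobba (f : ℤ → L) : Prop :=
  ∃ ρ₀ ∈ Set.Ioo (0 : ℝ≥0) 1, ∀ ρ ∈ Set.Ico ρ₀ (1 : ℝ≥0),
    Filter.Tendsto (fun i : ℤ => (‖f i‖₊ * ρ ^ i : ℝ≥0)) Filter.cofinite (nhds 0)

/-- `h = u·v` (convolution product of Laurent series). -/
def IsLaurentMul (u v h : ℤ → L) : Prop :=
  ∀ i : ℤ, HasSum (fun j : ℤ => u j * v (i - j)) (h i)

/-- The Laurent series `1`. -/
def laurentOne : ℤ → L := fun i => if i = 0 then 1 else 0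

/-- The coefficients of `S = φ(T) = (1+T)^p − 1`. -/
noncomputable def frobT (p : ℕ) : ℤ → L :=
  fun i => if 1 ≤ i ∧ i ≤ (p : ℤ) then ((p.choose i.toNat : ℕ) : L) else 0

/-!
For `k ≥ 0` only `i ∈ [0, k]` contribute to `(φ f)_k = Σ_i f_i (S^i)_k`, and the diagonal
coefficient is `(S^k)_k = p^k`; for `k < 0` only `i ∈ (k, 0)` contribute.  Hence the `k`-th
coefficient of `(p²φ − 1)f` is `(p^{k+2} − 1) f_k`, resp. `−f_k`, plus a `ℚ_p`-linear
combination of coefficients `f_i` with `|i| < |k|`, and induction on `|k|` gives `f_k ∈ ℚ_p`.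
The support of `S^{-n}` in degrees `≤ −pn` is where the Robba condition enters: `S` is
`T^p` plus terms divisible by `p`, so on a circle `|T| = ρ` close enough to `1` the term
`T^p` dominates, and a nonzero coefficient of `S^{-n}` in too high a degree would give a
term of maximal size in `S^{-n}·S` that cannot cancel.
-/

open Filter Topology

theorem HasSum.eq_sum_of_ne_finset_zero {ι M : Type*} [AddCommMonoid M] [TopologicalSpace M]
    [T2Space M] {f : ι → M} {a : M} (hf : HasSum f a) {s : Finset ι} (hs : ∀ i ∉ s, f i = 0) :
    a = ∑ i ∈ s, f i :=
  hf.unique (hasSum_sum_of_ne_finset_zero hs)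

theorem Filter.Tendsto.exists_forall_le_of_cofinite {ι β : Type*} [LinearOrder β]
    [TopologicalSpace β] [ClosedIciTopology β] {g : ι → β} {b : β} (hg : Tendsto g cofinite (𝓝 b))
    {s : Set ι} {i : ι} (hi : i ∈ s) (hgi : b < g i) : ∃ m ∈ s, ∀ j ∈ s, g j ≤ g m := by
  have hfin : {j | g i ≤ g j}.Finite := by
    simpa only [eventually_cofinite, not_lt] using hg.eventually_lt_const hgi
  obtain ⟨m, ⟨hms, hm⟩, hmax⟩ :=
    Set.exists_max_image {j ∈ s | g i ≤ g j} g (hfin.subset fun j hj => hj.2) ⟨i, hi, le_rfl⟩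
  refine ⟨m, hms, fun j hj => ?_⟩
  rcases le_total (g i) (g j) with h | h
  · exact hmax j ⟨hj, h⟩
  · exact h.trans hm

theorem NNReal.exists_mem_Ico_mul_zpow_lt_one {a ρ₀ : ℝ≥0} (ha : a < 1) (hρ₀ : ρ₀ < 1) (n : ℤ) :
    ∃ ρ ∈ Set.Ico ρ₀ 1, a * ρ ^ n < 1 := by
  have : NeBot (𝓝[<] (1 : ℝ≥0)) := nhdsLT_neBot_of_exists_lt ⟨0, one_pos⟩
  have hcont : Tendsto (fun ρ : ℝ≥0 => a * ρ ^ n) (𝓝[<] 1) (𝓝 (a * 1 ^ n)) :=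
    ((continuousAt_zpow₀ 1 n (Or.inl one_ne_zero)).const_mul a).tendsto.mono_left
      nhdsWithin_le_nhds
  rw [one_zpow, mul_one] at hcont
  obtain ⟨ρ, hρ, hlt⟩ := ((show ∀ᶠ ρ in 𝓝[<] 1, ρ ∈ Set.Ioo ρ₀ 1 from Ioo_mem_nhdsLT hρ₀).and
    (hcont.eventually_lt_const ha)).exists
  exact ⟨ρ, Set.Ioo_subset_Ico_self hρ, hlt⟩

section frobT

variable {p : ℕ}

theorem frobT_eq_zero {k : ℤ} (h : k < 1 ∨ (p : ℤ) < k) : frobT (L := L) p k = 0 :=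
  if_neg fun ⟨h1, h2⟩ => by omega

theorem frobT_natCast_self (hp : p ≠ 0) : frobT (L := L) p p = 1 := by
  rw [frobT, if_pos ⟨by omega, le_rfl⟩]
  simp

theorem frobT_one (hp : p ≠ 0) : frobT (L := L) p 1 = p := by
  rw [frobT, if_pos ⟨le_rfl, by omega⟩]
  simp

theorem nnnorm_frobT_le [IsUltrametricDist L] (hp : p.Prime) {k : ℤ} (hk : k ≠ p) :
    ‖frobT (L := L) p k‖₊ ≤ ‖(p : L)‖₊ := by
  unfold frobT
  split_ifs with h
  · obtain ⟨t, ht⟩ := hp.dvd_choose_self (k := k.toNat) (by omega) (by omega)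
    rw [ht, Nat.cast_mul, nnnorm_mul]
    exact mul_le_of_le_one_right' (IsUltrametricDist.nnnorm_natCast_le_one L t)
  · simp

theorem IsLaurentMul.apply_add_eq_add_sum_frobT {u h : ℤ → L} (hp : p ≠ 0)
    (hmul : IsLaurentMul u (frobT p) h) (m : ℤ) :
    h (m + p) = u m + ∑ j ∈ Finset.Ioo m (m + p), u j * frobT p (m + p - j) := by
  have hsupp : ∀ j ∉ Finset.Ico m (m + p), u j * frobT (L := L) p (m + p - j) = 0 := by
    intro j hj
    rw [Finset.mem_Ico, not_and_or, not_le, not_lt] at hj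
    rw [frobT_eq_zero (by omega), mul_zero]
  rw [(hmul (m + p)).eq_sum_of_ne_finset_zero hsupp, ← Finset.Ioo_insert_left (by omega),
    Finset.sum_insert Finset.left_notMem_Ioo, add_sub_cancel_left, frobT_natCast_self hp,
    mul_one]

theorem MemRobba.eq_zero_of_isLaurentMul_frobT [IsUltrametricDist L] (hp : p.Prime)
    (hpL : ‖(p : L)‖ < 1) {u h : ℤ → L} (hu : MemRobba u) (hmul : IsLaurentMul u (frobT p) h)
    {c : ℤ} (hh : ∀ k, c < k → h k = 0) {k : ℤ} (hk : c - p < k) : u k = 0 := by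
  by_contra huk
  obtain ⟨ρ₀, ⟨hρ₀0, hρ₀1⟩, hconv⟩ := hu
  obtain ⟨ρ, ⟨hρ₀ρ, hρ1⟩, hε⟩ :=
    NNReal.exists_mem_Ico_mul_zpow_lt_one (a := ‖(p : L)‖₊) hpL hρ₀1 (1 - p)
  -- on `|T| = ρ` the terms of `S` other than `T^p` are smaller than it by the factor `ε < 1`
  set ε : ℝ≥0 := ‖(p : L)‖₊ * ρ ^ (1 - (p : ℤ))
  have hρ0 : 0 < ρ := hρ₀0.trans_le hρ₀ρ
  set g : ℤ → ℝ≥0 := fun j => ‖u j‖₊ * ρ ^ j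
  have hgk : 0 < g k := mul_pos (nnnorm_pos.2 huk) (zpow_pos hρ0 k)
  obtain ⟨m, hm, hmax⟩ :=
    (hconv ρ ⟨hρ₀ρ, hρ1⟩).exists_forall_le_of_cofinite (s := Set.Ioi (c - p)) hk hgk
  have hum : u m = -∑ j ∈ Finset.Ioo m (m + p), u j * frobT p (m + p - j) := by
    have := hmul.apply_add_eq_add_sum_frobT hp.ne_zero m
    rw [hh _ (by simp only [Set.mem_Ioi] at hm; omega)] at this
    exact eq_neg_of_add_eq_zero_left this.symm
  have hterm : ∀ j ∈ Finset.Ioo m (m + p),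
      ‖u j * frobT p (m + p - j)‖₊ * ρ ^ m ≤ ε * g m := by
    intro j hj
    rw [Finset.mem_Ioo] at hj
    calc ‖u j * frobT p (m + p - j)‖₊ * ρ ^ m
      _ = ‖frobT (L := L) p (m + p - j)‖₊ * (‖u j‖₊ * ρ ^ m) := by rw [nnnorm_mul]; ring
      _ ≤ ‖(p : L)‖₊ * (‖u j‖₊ * (ρ ^ (1 - (p : ℤ)) * ρ ^ j)) := by
        gcongr
        · exact nnnorm_frobT_le hp (by omega)
        · rw [← zpow_add₀ hρ0.ne']
          exact zpow_le_zpow_right_of_le_one₀ hρ0 hρ1.le (by omega)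
      _ = ε * g j := by ring
      _ ≤ ε * g m := by
        gcongr
        exact hmax j (by simp only [Set.mem_Ioi] at hm ⊢; omega)
  have hgm : g m ≤ ε * g m := by
    have hnorm : ‖u m‖₊ ≤ ε * g m / ρ ^ m := by
      rw [hum, nnnorm_neg]
      exact IsUltrametricDist.nnnorm_sum_le_of_forall_le fun j hj =>
        (le_div_iff₀ (zpow_pos hρ0 m)).2 (hterm j hj)
    exact (le_div_iff₀ (zpow_pos hρ0 m)).1 hnorm
  have hgm0 : 0 < g m := hgk.trans_le (hmax k hk)
  exact (hgm.trans_lt (mul_lt_of_lt_one_left hgm0 hε)).false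

end frobT

section frobeniusPowers

variable {p : ℕ} {SP : ℤ → ℤ → L} (hSP0 : SP 0 = laurentOne)
  (hSPmul : ∀ i : ℤ, IsLaurentMul (SP i) (frobT p) (SP (i + 1)))
include hSP0 hSPmul

theorem frobPow_eq_zero_of_lt {i k : ℤ} (hi : 0 ≤ i) (hk : k < i) : SP i k = 0 := by
  induction i, hi using Int.leInduction generalizing k with
  | base => rw [hSP0, laurentOne, if_neg hk.ne]
  | succ i hi ih =>
    have hzero : (fun j => SP i j * frobT (L := L) p (k - j)) = 0 := by
      funext j
      rcases lt_or_ge j i with hj | hj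
      · rw [ih hj, zero_mul, Pi.zero_apply]
      · rw [frobT_eq_zero (Or.inl (by omega)), mul_zero, Pi.zero_apply]
    exact (hSPmul i k).unique (hzero ▸ hasSum_zero)

theorem frobPow_natCast_self (hp : p ≠ 0) (n : ℕ) : SP n n = (p : L) ^ n := by
  induction n with
  | zero => simp [hSP0, laurentOne]
  | succ n ih =>
    have hsupp : ∀ j ∉ ({(n : ℤ)} : Finset ℤ), SP n j * frobT (L := L) p (n + 1 - j) = 0 := by
      intro j hj
      rw [Finset.mem_singleton] at hj
      rcases lt_or_gt_of_ne hj with hj | hj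
      · rw [frobPow_eq_zero_of_lt hSP0 hSPmul (by omega) hj, zero_mul]
      · rw [frobT_eq_zero (Or.inl (by omega)), mul_zero]
    push_cast
    rw [(hSPmul n (n + 1)).eq_sum_of_ne_finset_zero hsupp, Finset.sum_singleton,
      add_sub_cancel_left, frobT_one hp, ih, pow_succ]

theorem frobPow_eq_zero_of_neg [IsUltrametricDist L] (hp : p.Prime) (hpL : ‖(p : L)‖ < 1)
    (hSProb : ∀ i : ℤ, MemRobba (SP i)) {i k : ℤ} (hi : i ≤ 0) (hk : p * i < k) :
    SP i k = 0 := by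
  induction i, hi using Int.leInductionDown generalizing k with
  | base => rw [hSP0, laurentOne, if_neg (by omega)]
  | pred i hi ih =>
    have hmul := hSPmul (i - 1)
    rw [sub_add_cancel] at hmul
    exact (hSProb (i - 1)).eq_zero_of_isLaurentMul_frobT hp hpL hmul (fun k' => ih)
      (by linarith)

end frobeniusPowers

section frobeniusCoeff

variable [IsUltrametricDist L] {p : ℕ} (hp : p.Prime) (hpL : ‖(p : L)‖ < 1)
  {SP : ℤ → ℤ → L} (hSP0 : SP 0 = laurentOne)
  (hSPmul : ∀ i : ℤ, IsLaurentMul (SP i) (frobT p) (SP (i + 1)))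
  (hSProb : ∀ i : ℤ, MemRobba (SP i))
  {f φf : ℤ → L} (hφf : ∀ k : ℤ, HasSum (fun i : ℤ => f i * SP i k) (φf k))
include hp hpL hSP0 hSPmul hSProb hφf

theorem frobenius_apply_natCast (n : ℕ) :
    φf n = (p : L) ^ n * f n + ∑ i ∈ Finset.Ico (0 : ℤ) n, f i * SP i n := by
  have hsupp : ∀ i ∉ Finset.Icc (0 : ℤ) n, f i * SP i n = 0 := by
    intro i hi
    rw [Finset.mem_Icc, not_and_or, not_le, not_le] at hi
    rcases hi with hi | hi
    · have : (p : ℤ) * i < n :=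
        (mul_neg_of_pos_of_neg (by exact_mod_cast hp.pos) hi).trans_le (Int.natCast_nonneg n)
      rw [frobPow_eq_zero_of_neg hSP0 hSPmul hp hpL hSProb hi.le this, mul_zero]
    · rw [frobPow_eq_zero_of_lt hSP0 hSPmul (by omega) hi, mul_zero]
  rw [(hφf n).eq_sum_of_ne_finset_zero hsupp, ← Finset.Ico_insert_right (by omega),
    Finset.sum_insert Finset.right_notMem_Ico, frobPow_natCast_self hSP0 hSPmul hp.ne_zero,
    mul_comm]

theorem frobenius_apply_of_neg {k : ℤ} (hk : k < 0) :
    φf k = ∑ i ∈ Finset.Ioo k 0, f i * SP i k := by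
  refine (hφf k).eq_sum_of_ne_finset_zero fun i hi => ?_
  rw [Finset.mem_Ioo, not_and_or, not_lt, not_lt] at hi
  rcases hi with hi | hi
  · have : (p : ℤ) * i < k := by nlinarith [hp.two_le]
    rw [frobPow_eq_zero_of_neg hSP0 hSPmul hp hpL hSProb (by omega) this, mul_zero]
  · rw [frobPow_eq_zero_of_lt hSP0 hSPmul hi (by omega), mul_zero]

variable {K0 : Subfield L} (hSPK0 : ∀ i k, SP i k ∈ K0)
  (hg : ∀ k : ℤ, (p : L) ^ 2 * φf k - f k ∈ K0)
include hSPK0 hg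

theorem mem_subfield_natCast_of_forall_mem_Ico (n : ℕ)
    (hlow : ∀ i ∈ Finset.Ico (0 : ℤ) n, f i ∈ K0) : f n ∈ K0 := by
  have hpK0 : (p : L) ∈ K0 := natCast_mem K0 p
  set s := ∑ i ∈ Finset.Ico (0 : ℤ) n, f i * SP i n
  have hs : s ∈ K0 := sum_mem fun i hi => mul_mem (hlow i hi) (hSPK0 i n)
  have hc : (p : L) ^ (n + 2) - 1 ≠ 0 := by
    refine sub_ne_zero.2 fun h => ?_
    have hnorm := congrArg norm h
    rw [norm_pow, norm_one] at hnorm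
    exact (pow_lt_one₀ (norm_nonneg _) hpL (by omega)).ne hnorm
  have hcoeff : ((p : L) ^ (n + 2) - 1) * f n = ((p : L) ^ 2 * φf n - f n) - (p : L) ^ 2 * s := by
    rw [frobenius_apply_natCast hp hpL hSP0 hSPmul hSProb hφf]
    ring
  rw [← inv_mul_cancel_left₀ hc (f n), hcoeff]
  exact mul_mem (inv_mem (sub_mem (pow_mem hpK0 _) (one_mem K0)))
    (sub_mem (hg n) (mul_mem (pow_mem hpK0 2) hs))

theorem mem_subfield_of_neg_of_forall_mem_Ioo {k : ℤ} (hk : k < 0)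
    (hlow : ∀ i ∈ Finset.Ioo k 0, f i ∈ K0) : f k ∈ K0 := by
  have hφ : φf k ∈ K0 := by
    rw [frobenius_apply_of_neg hp hpL hSP0 hSPmul hSProb hφf hk]
    exact sum_mem fun i hi => mul_mem (hlow i hi) (hSPK0 i k)
  rw [show f k = (p : L) ^ 2 * φf k - ((p : L) ^ 2 * φf k - f k) by ring]
  exact sub_mem (mul_mem (pow_mem (natCast_mem K0 p) 2) hφ) (hg k)

end frobeniusCoeff

theorem H1_map_injective_general
    [IsUltrametricDist L]
    (p : ℕ) (hp : p.Prime) (hpL : ‖(p : L)‖ < 1)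
    -- the subfield `ℚ_p ⊆ L`
    (K0 : Subfield L)
    -- `SP i` = the `i`-th convolution power `S^i` of `S = (1+T)^p − 1`, for `i ∈ ℤ`
    (SP : ℤ → (ℤ → L)) (hSP0 : SP 0 = laurentOne)
    (hSPmul : ∀ i : ℤ, IsLaurentMul (SP i) (frobT p) (SP (i + 1)))
    (hSProb : ∀ i : ℤ, MemRobba (SP i))
    (hSPK0 : ∀ i k, SP i k ∈ K0)
    -- `f ∈ R_L` and `g = (p²φ − 1)f`
    (f : ℤ → L)
    (φf : ℤ → L) (hφf : ∀ k : ℤ, HasSum (fun i : ℤ => f i * SP i k) (φf k))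
    (hg : ∀ k : ℤ, (p : L) ^ 2 * φf k - f k ∈ K0) :
    -- conclusion: `f ∈ R_{ℚ_p}`
    ∀ k : ℤ, f k ∈ K0 := by
  intro k
  induction hN : k.natAbs using Nat.strong_induction_on generalizing k with
  | _ N ih =>
    have hlow : ∀ i : ℤ, i.natAbs < k.natAbs → f i ∈ K0 := fun i hi => ih _ (hN ▸ hi) i rfl
    rcases lt_or_ge k 0 with hk | hk
    · refine mem_subfield_of_neg_of_forall_mem_Ioo hp hpL hSP0 hSPmul hSProb hφf hSPK0 hg hk
        fun i hi => hlow i ?_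
      rw [Finset.mem_Ioo] at hi
      omega
    · lift k to ℕ using hk
      refine mem_subfield_natCast_of_forall_mem_Ico hp hpL hSP0 hSPmul hSProb hφf hSPK0 hg k
        fun i hi => hlow i ?_
      rw [Finset.mem_Ico] at hi
      omega

theorem H1_map_injective
    [IsUltrametricDist L] [CompleteSpace L] [CharZero L]
    (p : ℕ) (hp : p.Prime) (hpL : ‖(p : L)‖ < 1)
    -- the subfield `ℚ_p ⊆ L`
    (K0 : Subfield L) (hK0closed : IsClosed (K0 : Set L))
    -- `SP i` = the `i`-th convolution power `S^i` of `S = (1+T)^p − 1`, for `i ∈ ℤ`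
    (SP : ℤ → (ℤ → L)) (hSP0 : SP 0 = laurentOne)
    (hSPmul : ∀ i : ℤ, IsLaurentMul (SP i) (frobT p) (SP (i + 1)))
    (hSProb : ∀ i : ℤ, MemRobba (SP i))
    (hSPK0 : ∀ i k, SP i k ∈ K0)
    -- `f ∈ R_L` and `g = (p²φ − 1)f`
    (f : ℤ → L) (hf : MemRobba f)
    (φf : ℤ → L) (hφf : ∀ k : ℤ, HasSum (fun i : ℤ => f i * SP i k) (φf k))
    (hg : ∀ k : ℤ, (p : L) ^ 2 * φf k - f k ∈ K0) :
    -- conclusion: `f ∈ R_{ℚ_p}`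
    ∀ k : ℤ, f k ∈ K0 :=
  H1_map_injective_general p hp hpL K0 SP hSP0 hSPmul hSProb hSPK0 f φf hφf hg
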